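/- As α → 1/δ from below, z_α → 0, and as β → +∞, z_β → +∞; that is, for any choice α ↦ z_α of roots of φ_α in (0, 1−αδ] one has lim_{α→(1/δ)⁻} z_α = 0, and for any choice β ↦ z_β of roots of φ_β in [1+βδ, ∞) one has lim_{β→∞} z_β = +∞. -/
import Mathlib


/-- The function `φ_α(z) = (2/(κ² m₁(m₁−1))) z^{m₁} + (z/r)(m₂−1) + m₂(α − 1/δ)`. -/
noncomputable def phiA (r δ κ m₁ m₂ α : ℝ) (z : ℝ) : ℝ :=
  2 / (κ ^ 2 * m₁ * (m₁ - 1)) * z ^ m₁ + z / r * (m₂ - 1) + m₂ * (α - 1 / δ)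

/-- The function `φ_β(z) = (2/(κ² m₂(m₂−1))) z^{m₂} + (z/r)(m₁−1) − m₁(β + 1/δ)`. -/
noncomputable def phiB (r δ κ m₁ m₂ β : ℝ) (z : ℝ) : ℝ :=
  2 / (κ ^ 2 * m₂ * (m₂ - 1)) * z ^ m₂ + z / r * (m₁ - 1) - m₁ * (β + 1 / δ)

/-- As `α → (1/δ)⁻`, `z_α → 0`, and as `β → +∞`, `z_β → +∞`: for any
choice `α ↦ z_α` of roots of `φ_α` in `(0, 1−αδ]`, one has `lim_{α→(1/δ)⁻} z_α = 0`,
and for any choice `β ↦ z_β` of roots of `φ_β` in `[1+βδ, ∞)`, `lim_{β→∞} z_β = +∞`. -/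
theorem boundary_constants_limits (r δ κ γ m₁ m₂ : ℝ)
    (hr : 0 < r) (hδ : 0 < δ) (hκ : 0 < κ) (hγ : 0 < γ) (hγ1 : γ ≠ 1)
    (hK : 0 < r + (δ - r) / γ + ((γ - 1) / (2 * γ ^ 2)) * κ ^ 2)
    (hQ1 : κ ^ 2 / 2 * m₁ ^ 2 + (δ - r - κ ^ 2 / 2) * m₁ - δ = 0)
    (hQ2 : κ ^ 2 / 2 * m₂ ^ 2 + (δ - r - κ ^ 2 / 2) * m₂ - δ = 0)
    (hm1 : 1 < m₁) (hm2 : m₂ < min ((γ - 1) / γ) 0) :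
    (∀ z : ℝ → ℝ,
      (∀ α : ℝ, 0 ≤ α → α < 1 / δ →
        z α ∈ Set.Ioc 0 (1 - α * δ) ∧ phiA r δ κ m₁ m₂ α (z α) = 0) →
      Filter.Tendsto z (nhdsWithin (1 / δ) (Set.Iio (1 / δ))) (nhds 0)) ∧
    (∀ z : ℝ → ℝ,
      (∀ β : ℝ, 0 ≤ β →
        z β ∈ Set.Ici (1 + β * δ) ∧ phiB r δ κ m₁ m₂ β (z β) = 0) →
      Filter.Tendsto z Filter.atTop Filter.atTop) := by
  constructor
  · intro z hz
    have hδ' : (0:ℝ) < 1 / δ := by positivity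
    have hev : ∀ᶠ α in nhdsWithin (1 / δ) (Set.Iio (1 / δ)), 0 < α :=
      eventually_nhdsWithin_of_eventually_nhds (eventually_gt_nhds hδ')
    have hmem : ∀ᶠ α in nhdsWithin (1 / δ) (Set.Iio (1 / δ)), α ∈ Set.Iio (1 / δ) :=
      eventually_mem_nhdsWithin
    have hup : Filter.Tendsto (fun α : ℝ => 1 - α * δ)
        (nhdsWithin (1 / δ) (Set.Iio (1 / δ))) (nhds 0) := by
      have hc : Continuous (fun α : ℝ => 1 - α * δ) := by continuity
      have h := (hc.tendsto (1 / δ)).mono_left (nhdsWithin_le_nhds (s := Set.Iio (1 / δ)))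
      simpa [one_div, inv_mul_cancel₀ hδ.ne'] using h
    refine tendsto_of_tendsto_of_tendsto_of_le_of_le' tendsto_const_nhds hup ?_ ?_
    · filter_upwards [hev, hmem] with α h0 h1
      exact (hz α h0.le h1).1.1.le
    · filter_upwards [hev, hmem] with α h0 h1
      exact (hz α h0.le h1).1.2
  · intro z hz
    have hb : Filter.Tendsto (fun β : ℝ => 1 + β * δ) Filter.atTop Filter.atTop :=
      Filter.tendsto_atTop_add_const_left _ _
        (Filter.tendsto_atTop_atTop_of_monotone (fun a b hab => by nlinarith)
          (fun c => ⟨c / δ, le_of_eq (div_mul_cancel₀ c hδ.ne').symm⟩))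
    have hle : (fun β : ℝ => 1 + β * δ) ≤ᶠ[Filter.atTop] z := by
      filter_upwards [Filter.eventually_ge_atTop (0:ℝ)] with β hβ
      exact (hz β hβ).1
    exact Filter.tendsto_atTop_mono' _ hle hb
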